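/- Let a>0 and let Q:ℝ→ℝ be real-analytic with Q(−x)=Q(x) and Q(x+2a)=Q(x) for all x. Define the Hadamard coefficients a₀(x,y)=1 and, for ν≥1, a_ν(x,y)=∫₀¹ s^{ν−1}[∂²₁a_{ν−1}(y+s(x−y),y) − Q(y+s(x−y))·a_{ν−1}(y+s(x−y),y)] ds, where ∂²₁ denotes the second derivative in the first argument. Then for every ν≥0, every b∈ℝ and every x∈ℝ, a_ν(bx,x)=a_ν(−bx,−x) and a_ν(a+bx,a+x)=a_ν(a−bx,a−x); equivalently, the Maclaurin series in x of a_ν(bx,x) and of a_ν(a+bx,a+x) contain only even powers of x. -/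
import Mathlib


noncomputable section
open MeasureTheory intervalIntegral

/-- The Hadamard coefficients `a_ν(x,y)` associated with the potential `Q`:
`a₀ = 1` and, for `ν ≥ 1`,
`a_ν(x,y) = ∫₀¹ s^{ν-1} [∂²₁ a_{ν-1}(y+s(x-y), y) - Q(y+s(x-y)) a_{ν-1}(y+s(x-y), y)] ds`. -/
def hadamardCoef (Q : ℝ → ℝ) : ℕ → ℝ → ℝ → ℝ
  | 0 => fun _ _ => 1
  | (ν + 1) => fun x y =>
      ∫ s in (0:ℝ)..1, s ^ ν *
        (deriv (fun z => deriv (fun z' => hadamardCoef Q ν z' y) z) (y + s * (x - y)) -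
          Q (y + s * (x - y)) * hadamardCoef Q ν (y + s * (x - y)) y)

lemma hadamard_refl (Q : ℝ → ℝ) (c : ℝ) (hc : ∀ z, Q (c - z) = Q z) :
    ∀ ν (x y : ℝ), hadamardCoef Q ν (c - x) (c - y) = hadamardCoef Q ν x y := by
  intro ν
  induction ν with
  | zero => intro x y; rfl
  | succ ν ih =>
    intro x y
    show (∫ s in (0:ℝ)..1, _) = _
    apply intervalIntegral.integral_congr
    intro s _
    have hfun : (fun z' => hadamardCoef Q ν z' (c - y)) =
        fun z' => hadamardCoef Q ν (c - z') y := by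
      funext w
      have := ih (c - w) y
      simpa using this
    have hpt : (c - y) + s * ((c - x) - (c - y)) = c - (y + s * (x - y)) := by ring
    simp only [hpt, hfun]
    congr 1
    congr 1
    · -- second derivative term
      have h1 : (fun z => deriv (fun z' => hadamardCoef Q ν (c - z') y) z) =
          fun z => -deriv (fun z' => hadamardCoef Q ν z' y) (c - z) := by
        funext z
        exact deriv_comp_const_sub (f := fun z' => hadamardCoef Q ν z' y) (a := c) (x := z)
      rw [h1]
      set w := y + s * (x - y)
      have h2 : deriv (fun z => -deriv (fun z' => hadamardCoef Q ν z' y) (c - z)) (c - w) =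
          -deriv (fun z => deriv (fun z' => hadamardCoef Q ν z' y) (c - z)) (c - w) :=
        deriv.neg
      rw [h2, deriv_comp_const_sub]
      simp
    · rw [hc, ih]

theorem stmt19 (a : ℝ) (ha : 0 < a) (Q : ℝ → ℝ)
    (hQan : ∀ x, AnalyticAt ℝ Q x)
    (hQev : ∀ x, Q (-x) = Q x) (hQper : ∀ x, Q (x + 2 * a) = Q x) :
    ∀ (ν : ℕ) (b x : ℝ),
      hadamardCoef Q ν (b * x) x = hadamardCoef Q ν (-(b * x)) (-x) ∧
      hadamardCoef Q ν (a + b * x) (a + x) = hadamardCoef Q ν (a - b * x) (a - x) := by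
  intro ν b x
  constructor
  · have h := hadamard_refl Q 0 (fun z => by simpa using hQev z) ν (b * x) x
    simpa using h.symm
  · have hc : ∀ z, Q (2 * a - z) = Q z := by
      intro z
      have h1 : Q (2 * a - z) = Q (z - 2 * a) := by
        have := hQev (z - 2 * a); simpa [neg_sub] using this
      have h2 : Q (z - 2 * a + 2 * a) = Q (z - 2 * a) := hQper (z - 2 * a)
      simp only [sub_add_cancel] at h2
      rw [h1, ← h2]
    have h := hadamard_refl Q (2 * a) hc ν (a + b * x) (a + x)
    have e1 : 2 * a - (a + b * x) = a - b * x := by ring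
    have e2 : 2 * a - (a + x) = a - x := by ring
    rw [e1, e2] at h
    exact h.symm
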